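/- arXiv:math/0505251 — 5 statements merged into one kernel-verified Lean document; each statement's English description precedes it below -/
import Mathlib

section
/- Let n, k ∈ ℕ, let z : Fin n → ℂ be injective, and let T be an n×n complex matrix with Matrix.charpoly T = ∏ i, (X − C (z i)). For a k×k matrix of polynomials R : Matrix (Fin k) (Fin k) (Polynomial ℂ), define R(T) : Matrix (Fin n × Fin k) (Fin n × Fin k) ℂ by R(T) = ∑ a, ∑ b, (Polynomial.aeval T (R a b)) ⊗ₖ (Matrix.stdBasisMatrix a b 1). Then R(T) = ∑ i, (Polynomial.aeval T (ℓ i)) ⊗ₖ (R.map (Polynomial.eval (z i))), where ℓ i = Lagrange.basis Finset.univ z i and R.map (Polynomial.eval (z i)) is the k×k complex matrix whose (a,b)-entry is (R a b).eval (z i). -/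
/-!
The characteristic polynomial of `T` is the nodal polynomial of `z`, so by Cayley–Hamilton
`aeval T p` only depends on `p` modulo it, i.e. on the interpolation data `p (z i)`; hence
`aeval T p = ∑ i, p (z i) • ℓ i (T)`. Applying this to every entry of `R` and using bilinearity
of the Kronecker product gives the formula.
-/

open Kronecker Polynomial

namespace Lagrange

variable {F A ι : Type*} [Field F] [Ring A] [Algebra F A] [DecidableEq ι]

theorem modByMonic_nodal_eq_interpolate {s : Finset ι} {v : ι → F} (hvs : Set.InjOn v s)
    (p : F[X]) : p %ₘ nodal s v = interpolate s v (fun i => p.eval (v i)) := by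
  refine eq_interpolate_of_eval_eq _ hvs ?_ fun i hi => ?_
  · rw [← degree_nodal (v := v)]
    exact degree_modByMonic_lt p nodal_monic
  · exact aeval_modByMonic_eq_self_of_root (eval_nodal_at_node hi)

theorem aeval_eq_sum_smul_aeval_basis {s : Finset ι} {v : ι → F} (hvs : Set.InjOn v s)
    {a : A} (ha : aeval a (nodal s v) = 0) (p : F[X]) :
    aeval a p = ∑ i ∈ s, p.eval (v i) • aeval a (Lagrange.basis s v i) := by
  rw [← aeval_modByMonic_eq_self_of_root ha,
    modByMonic_nodal_eq_interpolate hvs, interpolate_apply, map_sum]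
  simp only [map_mul, aeval_C, Algebra.smul_def]

end Lagrange

namespace Matrix

variable {R ι l m n p : Type*}

theorem sum_kronecker [NonUnitalNonAssocSemiring R] (s : Finset ι) (A : ι → Matrix l m R)
    (B : Matrix n p R) : (∑ i ∈ s, A i) ⊗ₖ B = ∑ i ∈ s, A i ⊗ₖ B := by
  ext; simp [sum_apply, Finset.sum_mul]

theorem kronecker_sum [NonUnitalNonAssocSemiring R] (s : Finset ι) (A : Matrix l m R)
    (B : ι → Matrix n p R) : A ⊗ₖ (∑ i ∈ s, B i) = ∑ i ∈ s, A ⊗ₖ B i := by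
  ext; simp [sum_apply, Finset.mul_sum]

theorem sum_sum_kronecker_single_eq_sum_kronecker [CommSemiring R] [Fintype ι] [Fintype n]
    [Fintype p] [DecidableEq n] [DecidableEq p] (A : ι → Matrix l m R) (c : ι → Matrix n p R) :
    ∑ a, ∑ b, (∑ i, c i a b • A i) ⊗ₖ single a b (1 : R) = ∑ i, A i ⊗ₖ c i := by
  have hsmul (a : n) (b : p) (i : ι) :
      (c i a b • A i) ⊗ₖ single a b (1 : R) = A i ⊗ₖ single a b (c i a b) := by
    rw [smul_kronecker, ← kronecker_smul, smul_single, smul_eq_mul, mul_one]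
  calc ∑ a, ∑ b, (∑ i, c i a b • A i) ⊗ₖ single a b (1 : R)
      = ∑ i, ∑ a, ∑ b, A i ⊗ₖ single a b (c i a b) := by
        simp only [sum_kronecker, hsmul]
        exact (Finset.sum_congr rfl fun _ _ => Finset.sum_comm).trans Finset.sum_comm
    _ = ∑ i, A i ⊗ₖ c i := by
        simp only [← kronecker_sum, ← matrix_eq_sum_single]

end Matrix

theorem stmt_4 (n k : ℕ) (z : Fin n → ℂ) (hz : Function.Injective z)
    (T : Matrix (Fin n) (Fin n) ℂ)
    (hT : T.charpoly = ∏ i, (Polynomial.X - Polynomial.C (z i)))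
    (R : Matrix (Fin k) (Fin k) (Polynomial ℂ)) :
    (∑ a, ∑ b, (Polynomial.aeval T (R a b)) ⊗ₖ (Matrix.single a b (1 : ℂ))) =
      ∑ i, (Polynomial.aeval T (Lagrange.basis Finset.univ z i)) ⊗ₖ
        (R.map (Polynomial.eval (z i))) := by
  have hnodal : aeval T (Lagrange.nodal Finset.univ z) = 0 := by
    rw [Lagrange.nodal, ← hT, Matrix.aeval_self_charpoly]
  rw [← Matrix.sum_sum_kronecker_single_eq_sum_kronecker]
  simp only [Matrix.map_apply, ← Lagrange.aeval_eq_sum_smul_aeval_basis hz.injOn hnodal]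
end

section
/- Let H be a complex Hilbert space, M : H →L[ℂ] H a bounded operator, z1, z2 ∈ ℂ, and k1, k2 ∈ H linearly independent vectors with M* k1 = (conj z1) • k1 and M* k2 = (conj z2) • k2. Set a = ‖k1‖², b = ‖k2‖², g = ⟪k1, k2⟫, and d = a*b − |g|² (which is positive by the strict Cauchy–Schwarz inequality, since k1, k2 are linearly independent). Define e1 = (√a)⁻¹ • k1, e2 = (√b)⁻¹ • k2, f = (√(a*d))⁻¹ • (a • k2 − g • k1). Let μ ∈ ℂ with |μ| ≤ 1 and set h1 = (0, e1) and h2 = ((√(1 − |μ|²)) • e2, μ • f) in H ⊕ H. Then: (i) h1 and h2 are orthonormal in H ⊕ H; (ii) (M* ⊕ M*) h1 = (conj z1) • h1; and (iii) (M* ⊕ M*) h2 = (conj z2) • h2 + ((μ * (conj z2 − conj z1) * g) / √d) • h1. In particular, the span of {h1, h2} is invariant under M* ⊕ M* and the matrix of the restriction of M* ⊕ M* in the ordered orthonormal basis (h1, h2) is !![conj z1, μ (conj z2 − conj z1) g / √d; 0, conj z2]. -/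
/-! Strict Cauchy–Schwarz for the independent pair `k1, k2` gives `d > 0`, and
`a • k2 - g • k1` is the Gram–Schmidt vector of `k2` against `k1`, of squared norm `a * d`;
hence `e1, e2, f` are unit vectors with `e1 ⟂ f`, and `h1, h2` are orthonormal because
`(1 - |μ|²) + |μ|² = 1`. Since `M*` scales `k1, k2` by `conj z1, conj z2`, it maps
`a • k2 - g • k1` to `conj z2 • (a • k2 - g • k1) + ((conj z2 - conj z1) * g) • k1`, so
`M* f = conj z2 • f + ((conj z2 - conj z1) * g / √d) • e1`; applying `M*` componentwise
gives the triangular action on `(h1, h2)`. -/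

open ContinuousLinearMap

open scoped InnerProductSpace

section InnerProductSpace

variable {𝕜 E : Type*} [RCLike 𝕜] [NormedAddCommGroup E] [InnerProductSpace 𝕜 E]

theorem norm_inner_lt_mul_norm_of_linearIndependent {x y : E}
    (h : LinearIndependent 𝕜 ![x, y]) : ‖⟪x, y⟫_𝕜‖ < ‖x‖ * ‖y‖ := by
  have hx : x ≠ 0 := by simpa using h.ne_zero 0
  have hy : y ≠ 0 := by simpa using h.ne_zero 1
  refine (norm_inner_le_norm x y).lt_of_ne fun heq => ?_
  obtain ⟨r, -, hr⟩ := (norm_inner_eq_norm_iff hx hy).1 heq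
  have := (LinearIndependent.pair_iff.1 h r (-1) (by simp [hr])).2
  norm_num at this

theorem sub_norm_inner_sq_pos_of_linearIndependent {x y : E}
    (h : LinearIndependent 𝕜 ![x, y]) : 0 < ‖x‖ ^ 2 * ‖y‖ ^ 2 - ‖⟪x, y⟫_𝕜‖ ^ 2 := by
  have := norm_inner_lt_mul_norm_of_linearIndependent h
  nlinarith [norm_nonneg ⟪x, y⟫_𝕜]

theorem inner_norm_sq_smul_sub_inner_smul (x y : E) :
    ⟪x, ((‖x‖ ^ 2 : ℝ) : 𝕜) • y - ⟪x, y⟫_𝕜 • x⟫_𝕜 = 0 := by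
  rw [inner_sub_right, inner_smul_right, inner_smul_right, inner_self_eq_norm_sq_to_K]
  push_cast
  ring

theorem norm_norm_sq_smul_sub_inner_smul (x y : E) :
    ‖((‖x‖ ^ 2 : ℝ) : 𝕜) • y - ⟪x, y⟫_𝕜 • x‖
      = √(‖x‖ ^ 2 * (‖x‖ ^ 2 * ‖y‖ ^ 2 - ‖⟪x, y⟫_𝕜‖ ^ 2)) := by
  set v := ((‖x‖ ^ 2 : ℝ) : 𝕜) • y - ⟪x, y⟫_𝕜 • x
  have hxv : ⟪x, v⟫_𝕜 = 0 := inner_norm_sq_smul_sub_inner_smul x y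
  have hv : ((‖v‖ ^ 2 : ℝ) : 𝕜)
      = ((‖x‖ ^ 2 * (‖x‖ ^ 2 * ‖y‖ ^ 2 - ‖⟪x, y⟫_𝕜‖ ^ 2) : ℝ) : 𝕜) := by
    calc ((‖v‖ ^ 2 : ℝ) : 𝕜) = ⟪v, v⟫_𝕜 := by rw [inner_self_eq_norm_sq_to_K]; push_cast; rfl
      _ = ((‖x‖ ^ 2 : ℝ) : 𝕜) * ⟪y, v⟫_𝕜 := by
        conv_lhs => rw [inner_sub_left, inner_smul_left, inner_smul_left, hxv]
        simp
      _ = _ := by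
        rw [inner_sub_right, inner_smul_right, inner_smul_right, inner_self_eq_norm_sq_to_K,
          ← inner_conj_symm x y, RCLike.conj_mul, RCLike.norm_conj]
        push_cast
        ring
  rw [← Real.sqrt_sq (norm_nonneg v), RCLike.ofReal_inj.1 hv]

theorem norm_inv_smul_of_norm_eq {v : E} {r : ℝ} (hv : ‖v‖ = r) (hr : r ≠ 0) :
    ‖((r : 𝕜))⁻¹ • v‖ = 1 := by
  rw [norm_smul, norm_inv, RCLike.norm_ofReal, hv, abs_of_nonneg (hv ▸ norm_nonneg v),
    inv_mul_cancel₀ hr]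

theorem WithLp.norm_toLp_eq_one_and_inner_eq_zero {e₁ e₂ f : E} (he₁ : ‖e₁‖ = 1)
    (he₂ : ‖e₂‖ = 1) (hf : ‖f‖ = 1) (he₁f : ⟪e₁, f⟫_𝕜 = 0) {s μ : 𝕜}
    (hsμ : ‖s‖ ^ 2 + ‖μ‖ ^ 2 = 1) :
    ‖toLp 2 ((0 : E), e₁)‖ = 1 ∧ ‖toLp 2 (s • e₂, μ • f)‖ = 1 ∧
      ⟪toLp 2 ((0 : E), e₁), toLp 2 (s • e₂, μ • f)⟫_𝕜 = 0 := by
  refine ⟨?_, ?_, ?_⟩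
  · simp [he₁]
  · simp [prod_norm_eq_of_L2, norm_smul, he₂, hf, hsμ]
  · simp [inner_smul_right, he₁f]

end InnerProductSpace

theorem map_smul_sub_smul_of_apply_eq_smul {K V F : Type*} [CommRing K] [AddCommGroup V]
    [Module K V] [FunLike F V V] [LinearMapClass F K V V] (T : F) {x y : V} {c₁ c₂ : K}
    (hx : T x = c₁ • x) (hy : T y = c₂ • y) (α β : K) :
    T (α • y - β • x) = c₂ • (α • y - β • x) + ((c₂ - c₁) * β) • x := by
  rw [map_sub, map_smul, map_smul, hx, hy]
  module

namespace WithLp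

variable {K V F : Type*} [CommRing K] [AddCommGroup V] [Module K V] [FunLike F V V]
  [LinearMapClass F K V V] (p : ENNReal) {T : F} {e₁ e₂ f : V} {c₁ c₂ : K}

theorem toLp_map_zero_eq_smul (h₁ : T e₁ = c₁ • e₁) :
    toLp p (T 0, T e₁) = c₁ • toLp p (0, e₁) := by
  rw [map_zero, h₁, ← toLp_smul, Prod.smul_mk, smul_zero]

theorem toLp_map_smul_smul_eq (h₂ : T e₂ = c₂ • e₂) {κ : K} (hf : T f = c₂ • f + κ • e₁)
    (s μ : K) :
    toLp p (T (s • e₂), T (μ • f)) = c₂ • toLp p (s • e₂, μ • f) + (μ * κ) • toLp p (0, e₁) := by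
  rw [map_smul, map_smul, h₂, hf, ← toLp_smul, ← toLp_smul, ← toLp_add]
  congr 1
  ext
  · simp only [Prod.smul_fst, Prod.fst_add, smul_zero, add_zero]; module
  · simp only [Prod.smul_snd, Prod.snd_add]; module

end WithLp

theorem stmt_5 {H : Type*} [NormedAddCommGroup H] [InnerProductSpace ℂ H]
    [CompleteSpace H]
    (M : H →L[ℂ] H) (z1 z2 : ℂ) (k1 k2 : H)
    (hind : LinearIndependent ℂ ![k1, k2])
    (hM1 : ContinuousLinearMap.adjoint M k1 = (starRingEnd ℂ) z1 • k1)
    (hM2 : ContinuousLinearMap.adjoint M k2 = (starRingEnd ℂ) z2 • k2)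
    (a b d : ℝ) (g : ℂ)
    (ha : a = ‖k1‖ ^ 2) (hb : b = ‖k2‖ ^ 2)
    (hg : g = (inner ℂ k1 k2 : ℂ))
    (hd : d = a * b - ‖g‖ ^ 2)
    (e1 e2 f : H)
    (he1 : e1 = ((Real.sqrt a : ℂ))⁻¹ • k1)
    (he2 : e2 = ((Real.sqrt b : ℂ))⁻¹ • k2)
    (hf : f = ((Real.sqrt (a * d) : ℂ))⁻¹ • ((a : ℂ) • k2 - g • k1))
    (μ : ℂ) (hμ : ‖μ‖ ≤ 1)
    (h1 h2 : WithLp 2 (H × H))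
    (hh1 : h1 = (WithLp.equiv 2 (H × H)).symm (0, e1))
    (hh2 : h2 = (WithLp.equiv 2 (H × H)).symm
      (((Real.sqrt (1 - ‖μ‖ ^ 2) : ℂ)) • e2, μ • f)) :
    (‖h1‖ = 1 ∧ ‖h2‖ = 1 ∧ (inner ℂ h1 h2 : ℂ) = 0) ∧
    (WithLp.equiv 2 (H × H)).symm
        (ContinuousLinearMap.adjoint M ((WithLp.equiv 2 (H × H)) h1).1,
         ContinuousLinearMap.adjoint M ((WithLp.equiv 2 (H × H)) h1).2)
      = (starRingEnd ℂ) z1 • h1 ∧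
    (WithLp.equiv 2 (H × H)).symm
        (ContinuousLinearMap.adjoint M ((WithLp.equiv 2 (H × H)) h2).1,
         ContinuousLinearMap.adjoint M ((WithLp.equiv 2 (H × H)) h2).2)
      = (starRingEnd ℂ) z2 • h2
        + ((μ * ((starRingEnd ℂ) z2 - (starRingEnd ℂ) z1) * g)
            / (Real.sqrt d : ℂ)) • h1 := by
  subst ha hb hg hd hh1 hh2
  have hk1 : 0 < ‖k1‖ := norm_pos_iff.2 (by simpa using hind.ne_zero 0)
  have hk2 : 0 < ‖k2‖ := norm_pos_iff.2 (by simpa using hind.ne_zero 1)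
  have hD := sub_norm_inner_sq_pos_of_linearIndependent hind
  have hne1 : ‖e1‖ = 1 :=
    he1 ▸ norm_inv_smul_of_norm_eq (Real.sqrt_sq hk1.le).symm (by positivity)
  have hne2 : ‖e2‖ = 1 :=
    he2 ▸ norm_inv_smul_of_norm_eq (Real.sqrt_sq hk2.le).symm (by positivity)
  have hnf : ‖f‖ = 1 :=
    hf ▸ norm_inv_smul_of_norm_eq (norm_norm_sq_smul_sub_inner_smul k1 k2) (by positivity)
  have he1f : ⟪e1, f⟫_ℂ = 0 := by
    have hk1v : ⟪k1, ((‖k1‖ ^ 2 : ℝ) : ℂ) • k2 - ⟪k1, k2⟫_ℂ • k1⟫_ℂ = 0 :=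
      inner_norm_sq_smul_sub_inner_smul k1 k2
    rw [he1, hf, inner_smul_left, inner_smul_right, hk1v, mul_zero, mul_zero]
  have hsμ : ‖((√(1 - ‖μ‖ ^ 2) : ℝ) : ℂ)‖ ^ 2 + ‖μ‖ ^ 2 = 1 := by
    rw [Complex.norm_real, Real.norm_of_nonneg (Real.sqrt_nonneg _),
      Real.sq_sqrt (by nlinarith [norm_nonneg μ])]
    ring
  have hTe1 : adjoint M e1 = (starRingEnd ℂ) z1 • e1 := by rw [he1, map_smul, hM1, smul_comm]
  have hTe2 : adjoint M e2 = (starRingEnd ℂ) z2 • e2 := by rw [he2, map_smul, hM2, smul_comm]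
  have hTf : adjoint M f = (starRingEnd ℂ) z2 • f
      + (((starRingEnd ℂ) z2 - (starRingEnd ℂ) z1) * ⟪k1, k2⟫_ℂ
          / √(‖k1‖ ^ 2 * ‖k2‖ ^ 2 - ‖⟪k1, k2⟫_ℂ‖ ^ 2) : ℂ) • e1 := by
    rw [hf, he1, map_smul, map_smul_sub_smul_of_apply_eq_smul _ hM1 hM2,
      Real.sqrt_mul (sq_nonneg _)]
    push_cast
    module
  simp only [WithLp.equiv_symm_apply, WithLp.equiv_apply]
  refine ⟨WithLp.norm_toLp_eq_one_and_inner_eq_zero hne1 hne2 hnf he1f hsμ,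
    WithLp.toLp_map_zero_eq_smul 2 hTe1, ?_⟩
  rw [WithLp.toLp_map_smul_smul_eq 2 hTe2 hTf, mul_div_assoc, mul_div_assoc, mul_assoc]
end

section
/- Let Ω ⊆ ℂ be a bounded open set, let z1, z2 ∈ Ω with z1 ≠ z2, let c ∈ ℂ, and let A = !![z1, 0; c, z2]. Suppose that ‖r(A)‖ ≤ 1 for every admissible rational function r = p/q for Ω with ‖r‖_Ω ≤ 1 and p.eval z1 = 0 (equivalently, r(z1) = 0). Then ‖r(A)‖ ≤ 1 for every admissible rational function r for Ω with ‖r‖_Ω ≤ 1. -/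
/-!
Let `r = p/q` be bounded by `1` on `K = closure Ω` with `α = r(z₁)` of modulus `< 1`. The Möbius
transform `s = (r - α)/(1 - ᾱ r) = (p - α q)/(q - ᾱ p)` is again admissible, bounded by `1` and
vanishes at `z₁`, so `‖s(A)‖ ≤ 1` by hypothesis. Inverting the transform gives
`r(A) (1 + ᾱ s(A)) = s(A) + α`, and `T ↦ (T + α)(1 + ᾱ T)⁻¹` maps contractions to contractions
since `‖x + ᾱ u‖² - ‖u + α x‖² = (1 - |α|²)(‖x‖² - ‖u‖²)`. The case `|r(z₁)| = 1` follows by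
applying this to `t r` for all `t < 1`.
-/

/-- The operator norm (on the Euclidean space `ℂ²`) of the value of the rational
function `p/q` at the `2 × 2` matrix `A`. -/
noncomputable def ratNormAt (A : Matrix (Fin 2) (Fin 2) ℂ) (p q : Polynomial ℂ) : ℝ :=
  ‖Matrix.toEuclideanCLM (𝕜 := ℂ) (Polynomial.aeval A p * (Polynomial.aeval A q)⁻¹)‖

open Polynomial ComplexConjugate
open scoped InnerProductSpace

theorem norm_add_smul_le_norm_add_conj_smul {E : Type*} [NormedAddCommGroup E]
    [InnerProductSpace ℂ E] {α : ℂ} (hα : ‖α‖ ≤ 1) {u x : E} (hux : ‖u‖ ≤ ‖x‖) :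
    ‖u + α • x‖ ≤ ‖x + conj α • u‖ := by
  have hre : RCLike.re ⟪x, conj α • u⟫_ℂ = RCLike.re ⟪u, α • x⟫_ℂ := by
    rw [inner_smul_right, inner_smul_right, ← inner_conj_symm x u]
    simp only [RCLike.re_to_complex, Complex.mul_re, Complex.conj_re, Complex.conj_im]
    ring
  have hsq : ‖x + conj α • u‖ ^ 2 - ‖u + α • x‖ ^ 2 =
      (1 - ‖α‖ ^ 2) * (‖x‖ ^ 2 - ‖u‖ ^ 2) := by
    rw [norm_add_sq (𝕜 := ℂ), norm_add_sq (𝕜 := ℂ), hre, norm_smul, norm_smul,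
      RCLike.norm_conj]
    ring
  have hα2 : 0 ≤ 1 - ‖α‖ ^ 2 := by nlinarith [norm_nonneg α]
  have hux2 : 0 ≤ ‖x‖ ^ 2 - ‖u‖ ^ 2 := by nlinarith [norm_nonneg u]
  exact (sq_le_sq₀ (norm_nonneg _) (norm_nonneg _)).mp (by nlinarith [mul_nonneg hα2 hux2])

theorem Complex.norm_sub_mul_le_norm_sub_conj_mul {a b α : ℂ} (hα : ‖α‖ ≤ 1)
    (hab : ‖a‖ ≤ ‖b‖) : ‖a - α * b‖ ≤ ‖b - conj α * a‖ := by
  simpa [sub_eq_add_neg] using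
    norm_add_smul_le_norm_add_conj_smul (E := ℂ) (α := -α) (by simpa using hα) hab

theorem Complex.sub_conj_mul_ne_zero {a b α : ℂ} (hα : ‖α‖ < 1) (hab : ‖a‖ ≤ ‖b‖)
    (hb : b ≠ 0) : b - conj α * a ≠ 0 := by
  intro h
  have hba : ‖b‖ = ‖α‖ * ‖a‖ := by
    rw [sub_eq_zero.mp h, norm_mul, Complex.norm_conj]
  have := mul_lt_of_lt_one_left (norm_pos_iff.mpr hb) hα
  nlinarith [norm_nonneg α]

theorem ContinuousLinearMap.norm_le_one_of_mul_one_add_conj_smul_eq {E : Type*}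
    [NormedAddCommGroup E] [InnerProductSpace ℂ E] [CompleteSpace E] {R T : E →L[ℂ] E} {α : ℂ}
    (hα : ‖α‖ < 1) (hT : ‖T‖ ≤ 1) (hR : R * (1 + conj α • T) = T + α • 1) : ‖R‖ ≤ 1 := by
  have hsmall : ‖-(conj α • T)‖ < 1 := by
    rw [norm_neg, norm_smul, RCLike.norm_conj]
    exact (mul_le_of_le_one_right (norm_nonneg α) hT).trans_lt hα
  let U := Units.oneSub _ hsmall
  have hU : (U : E →L[ℂ] E) = 1 + conj α • T := sub_neg_eq_add _ _
  refine R.opNorm_le_bound zero_le_one fun y => ?_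
  obtain ⟨x, rfl⟩ : ∃ x, x + conj α • T x = y :=
    ⟨(↑U⁻¹ : E →L[ℂ] E) y, by simpa [hU] using congr($(U.mul_inv) y)⟩
  have hRx : R (x + conj α • T x) = T x + α • x := by
    simpa using congr($hR x)
  rw [hRx, one_mul]
  exact norm_add_smul_le_norm_add_conj_smul hα.le ((T.le_of_opNorm_le hT x).trans_eq (one_mul _))

theorem Matrix.mul_inv_mul_one_add_smul_eq {n R : Type*} [Fintype n] [DecidableEq n] [CommRing R]
    {P Q : Matrix n n R} {α β : R} (hQ : IsUnit Q.det) (hQ' : IsUnit (Q - β • P).det) :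
    P * Q⁻¹ * (1 + β • ((P - α • Q) * (Q - β • P)⁻¹)) =
      (P - α • Q) * (Q - β • P)⁻¹ + α • 1 := by
  set Q' := Q - β • P
  have hQQ' : (1 - α * β) • Q = Q' + β • (P - α • Q) := by module
  have hPQ' : (1 - α * β) • P = (P - α • Q) + α • Q' := by module
  calc P * Q⁻¹ * (1 + β • ((P - α • Q) * Q'⁻¹))
      = P * Q⁻¹ * ((1 - α * β) • Q * Q'⁻¹) := by
        rw [hQQ', Matrix.add_mul, Matrix.mul_nonsing_inv _ hQ', Matrix.smul_mul]
    _ = (1 - α * β) • P * Q'⁻¹ := by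
        rw [Matrix.smul_mul, Matrix.mul_smul, Matrix.mul_assoc, ← Matrix.mul_assoc Q⁻¹,
          Matrix.nonsing_inv_mul _ hQ, Matrix.one_mul, Matrix.smul_mul]
    _ = (P - α • Q) * Q'⁻¹ + α • 1 := by
        rw [hPQ', Matrix.add_mul, Matrix.smul_mul, Matrix.mul_nonsing_inv _ hQ']

theorem isUnit_aeval_of_forall_mem_spectrum {𝕜 A : Type*} [Field 𝕜] [IsAlgClosed 𝕜] [Ring A]
    [Algebra 𝕜 A] [FiniteDimensional 𝕜 A] {a : A} {q : 𝕜[X]}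
    (hq : ∀ k ∈ spectrum 𝕜 a, q.eval k ≠ 0) : IsUnit (aeval a q) := by
  nontriviality A
  rw [← spectrum.zero_notMem_iff 𝕜, spectrum.map_polynomial_aeval_of_nonempty a q
    (spectrum.nonempty_of_isAlgClosed_of_finiteDimensional 𝕜 a)]
  rintro ⟨k, hk, hk0⟩
  exact hq k hk hk0

theorem Matrix.spectrum_lowerTriangular_fin_two_subset {K : Type*} [Field K] (a b c : K) :
    spectrum K !![a, 0; c, b] ⊆ {a, b} := by
  intro k hk
  rw [Matrix.mem_spectrum_iff_isRoot_charpoly, Matrix.charpoly_fin_two, IsRoot.def] at hk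
  simp only [eval_add, eval_sub, eval_pow, eval_X, eval_mul, eval_C, Matrix.trace_fin_two_of,
    Matrix.det_fin_two_of] at hk
  have hroots : (k - a) * (k - b) = 0 := by linear_combination hk
  rcases mul_eq_zero.mp hroots with h | h
  · exact .inl (sub_eq_zero.mp h)
  · exact .inr (sub_eq_zero.mp h)

section

variable {n : Type*} [Fintype n] [DecidableEq n] {K : Set ℂ} {A : Matrix n n ℂ} {z : ℂ}

theorem norm_toEuclideanCLM_aeval_mul_inv_le_one_of_norm_lt_one
    (hA : spectrum ℂ A ⊆ K) (hz : z ∈ K)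
    (hyp : ∀ p q : ℂ[X], (∀ w ∈ K, q.eval w ≠ 0) → (∀ w ∈ K, ‖p.eval w / q.eval w‖ ≤ 1) →
      p.eval z = 0 → ‖Matrix.toEuclideanCLM (𝕜 := ℂ) (aeval A p * (aeval A q)⁻¹)‖ ≤ 1)
    {p q : ℂ[X]} (hq : ∀ w ∈ K, q.eval w ≠ 0) (hpq : ∀ w ∈ K, ‖p.eval w / q.eval w‖ ≤ 1)
    (hpqz : ‖p.eval z / q.eval z‖ < 1) :
    ‖Matrix.toEuclideanCLM (𝕜 := ℂ) (aeval A p * (aeval A q)⁻¹)‖ ≤ 1 := by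
  set α := p.eval z / q.eval z
  have hle : ∀ w ∈ K, ‖p.eval w‖ ≤ ‖q.eval w‖ := fun w hw => by
    simpa [norm_div, div_le_one (norm_pos_iff.mpr (hq w hw))] using hpq w hw
  have hq' : ∀ w ∈ K, (q - conj α • p).eval w ≠ 0 := fun w hw => by
    simpa using Complex.sub_conj_mul_ne_zero hpqz (hle w hw) (hq w hw)
  have hpq' : ∀ w ∈ K, ‖(p - α • q).eval w / (q - conj α • p).eval w‖ ≤ 1 :=
    fun w hw => by
      rw [norm_div, div_le_one (norm_pos_iff.mpr (hq' w hw))]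
      simpa using Complex.norm_sub_mul_le_norm_sub_conj_mul hpqz.le (hle w hw)
  have hz' : (p - α • q).eval z = 0 := by simp [α, div_mul_cancel₀ _ (hq z hz)]
  have hdet : ∀ r : ℂ[X], (∀ w ∈ K, r.eval w ≠ 0) → IsUnit (aeval A r).det := fun r hr =>
    (Matrix.isUnit_iff_isUnit_det _).mp
      (isUnit_aeval_of_forall_mem_spectrum fun k hk => hr k (hA hk))
  have hmat := Matrix.mul_inv_mul_one_add_smul_eq (α := α) (hdet q hq)
    (by simpa only [map_sub, map_smul] using hdet _ hq')
  refine ContinuousLinearMap.norm_le_one_of_mul_one_add_conj_smul_eq hpqz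
    (hyp _ _ hq' hpq' hz') ?_
  simpa only [map_sub, map_smul, map_mul, map_add, map_one] using
    congr(Matrix.toEuclideanCLM (𝕜 := ℂ) $hmat)

theorem norm_toEuclideanCLM_aeval_mul_inv_le_one
    (hA : spectrum ℂ A ⊆ K) (hz : z ∈ K)
    (hyp : ∀ p q : ℂ[X], (∀ w ∈ K, q.eval w ≠ 0) → (∀ w ∈ K, ‖p.eval w / q.eval w‖ ≤ 1) →
      p.eval z = 0 → ‖Matrix.toEuclideanCLM (𝕜 := ℂ) (aeval A p * (aeval A q)⁻¹)‖ ≤ 1)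
    {p q : ℂ[X]} (hq : ∀ w ∈ K, q.eval w ≠ 0) (hpq : ∀ w ∈ K, ‖p.eval w / q.eval w‖ ≤ 1) :
    ‖Matrix.toEuclideanCLM (𝕜 := ℂ) (aeval A p * (aeval A q)⁻¹)‖ ≤ 1 := by
  rw [← coe_nnnorm, NNReal.coe_le_one]
  refine NNReal.le_of_forall_lt_one_mul_le fun t ht => ?_
  have hscaled : ∀ w ∈ K, ‖((t : ℂ) • p).eval w / q.eval w‖ ≤ t * 1 := fun w hw => by
    rw [eval_smul, smul_eq_mul, mul_div_assoc, norm_mul, Complex.norm_real, NNReal.norm_eq]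
    gcongr
    exact hpq w hw
  have := norm_toEuclideanCLM_aeval_mul_inv_le_one_of_norm_lt_one hA hz hyp hq
    (fun w hw => (hscaled w hw).trans (by simpa using ht.le))
    ((hscaled z hz).trans_lt (by simpa using ht))
  rw [map_smul, Matrix.smul_mul, map_smul, norm_smul, Complex.norm_real, NNReal.norm_eq] at this
  exact_mod_cast this

end

theorem stmt_7_general (Ω : Set ℂ)
    (z1 z2 : ℂ) (hz1 : z1 ∈ Ω) (hz2 : z2 ∈ Ω) (c : ℂ)
    (A : Matrix (Fin 2) (Fin 2) ℂ) (hA : A = !![z1, 0; c, z2])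
    (hyp : ∀ p q : Polynomial ℂ,
      (∀ w ∈ closure Ω, q.eval w ≠ 0) →
      (∀ w ∈ closure Ω, ‖p.eval w / q.eval w‖ ≤ 1) →
      p.eval z1 = 0 → ratNormAt A p q ≤ 1) :
    ∀ p q : Polynomial ℂ,
      (∀ w ∈ closure Ω, q.eval w ≠ 0) →
      (∀ w ∈ closure Ω, ‖p.eval w / q.eval w‖ ≤ 1) →
      ratNormAt A p q ≤ 1 := by
  subst hA
  have hspec : spectrum ℂ !![z1, 0; c, z2] ⊆ closure Ω :=
    (Matrix.spectrum_lowerTriangular_fin_two_subset z1 z2 c).trans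
      (Set.insert_subset (subset_closure hz1) (Set.singleton_subset_iff.mpr (subset_closure hz2)))
  exact fun p q hq hpq =>
    norm_toEuclideanCLM_aeval_mul_inv_le_one hspec (subset_closure hz1) hyp hq hpq

theorem stmt_7 (Ω : Set ℂ) (hΩo : IsOpen Ω) (hΩb : Bornology.IsBounded Ω)
    (z1 z2 : ℂ) (hz1 : z1 ∈ Ω) (hz2 : z2 ∈ Ω) (hz : z1 ≠ z2) (c : ℂ)
    (A : Matrix (Fin 2) (Fin 2) ℂ) (hA : A = !![z1, 0; c, z2])
    (hyp : ∀ p q : Polynomial ℂ,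
      (∀ w ∈ closure Ω, q.eval w ≠ 0) →
      (∀ w ∈ closure Ω, ‖p.eval w / q.eval w‖ ≤ 1) →
      p.eval z1 = 0 → ratNormAt A p q ≤ 1) :
    ∀ p q : Polynomial ℂ,
      (∀ w ∈ closure Ω, q.eval w ≠ 0) →
      (∀ w ∈ closure Ω, ‖p.eval w / q.eval w‖ ≤ 1) →
      ratNormAt A p q ≤ 1 :=
  stmt_7_general Ω z1 z2 hz1 hz2 c A hA hyp
end

section
/- Let z1, z2 ∈ ℂ with |z1| < 1 and |z2| < 1. For η ∈ ℂ define the 2×2 complex matrix T_η = !![z1, 0; η * Real.sqrt ((1 − |z1|²) * (1 − |z2|²)), z2]. Then for μ, μ' ∈ ℂ, there exists a unitary U ∈ Matrix.unitaryGroup (Fin 2) ℂ with T_{μ'} = U * T_μ * star U if and only if |μ'| = |μ|. -/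
/-! The quantity `trace (Tᴴ T) = ‖z1‖² + ‖z2‖² + ‖η‖² (1 - ‖z1‖²)(1 - ‖z2‖²)` is invariant under
unitary similarity, and the defect factor is nonzero because `‖z1‖, ‖z2‖ < 1`; this forces
`‖μ'‖ = ‖μ‖`. Conversely, if `μ' = ω μ` with `‖ω‖ = 1`, conjugating by `diag(1, ω)` multiplies the
lower-left entry by `ω` and leaves the other entries of `T_μ` unchanged. -/

/-- The matrix `T_η` of (3.6): `!![z1, 0; η √((1-|z1|²)(1-|z2|²)), z2]`. -/
noncomputable def Tmat (z1 z2 η : ℂ) : Matrix (Fin 2) (Fin 2) ℂ :=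
  !![z1, 0;
     η * (Real.sqrt ((1 - ‖z1‖ ^ 2) * (1 - ‖z2‖ ^ 2)) : ℂ), z2]

namespace Matrix

theorem trace_conjTranspose_mul_self_unitary_conj {n R : Type*} [Fintype n] [DecidableEq n]
    [CommRing R] [StarRing R] {U : Matrix n n R} (hU : U ∈ unitaryGroup n R)
    (A : Matrix n n R) :
    ((U * A * star U)ᴴ * (U * A * star U)).trace = (Aᴴ * A).trace := by
  have hUU : star U * U = 1 := Unitary.star_mul_self_of_mem hU
  calc ((U * A * star U)ᴴ * (U * A * star U)).trace
      = (U * (Aᴴ * (star U * U) * A) * star U).trace := by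
        simp only [conjTranspose_mul, conjTranspose_conjTranspose, star_eq_conjTranspose,
          Matrix.mul_assoc]
    _ = (Aᴴ * A).trace := by
        rw [hUU, Matrix.mul_one, trace_mul_cycle, hUU, Matrix.one_mul]

theorem trace_conjTranspose_mul_self_eq_sum_norm_sq {m n 𝕜 : Type*} [Fintype m] [Fintype n]
    [RCLike 𝕜] (A : Matrix m n 𝕜) :
    (Aᴴ * A).trace = ∑ i, ∑ j, (‖A i j‖ ^ 2 : 𝕜) := by
  simp only [trace, diag, mul_apply, conjTranspose_apply, RCLike.star_def, RCLike.conj_mul]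
  exact Finset.sum_comm

theorem diagonal_mem_unitaryGroup {n R : Type*} [Fintype n] [DecidableEq n] [CommRing R]
    [StarRing R] {d : n → R} (hd : ∀ i, d i ∈ unitary R) : diagonal d ∈ unitaryGroup n R := by
  rw [mem_unitaryGroup_iff, star_eq_conjTranspose, diagonal_conjTranspose, diagonal_mul_diagonal,
    ← diagonal_one]
  exact congrArg diagonal (funext fun i => Unitary.mul_star_self_of_mem (hd i))

theorem diagonal_one_conj_fin_two {R : Type*} [CommRing R] [StarRing R] {ω : R}
    (hω : ω ∈ unitary R) (a b c d : R) :
    diagonal ![1, ω] * !![a, b; c, d] * star (diagonal ![1, ω]) = !![a, b * star ω; ω * c, d] := by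
  have hωω : ω * star ω = 1 := Unitary.mul_star_self_of_mem hω
  ext i j
  fin_cases i <;> fin_cases j <;> simp [star_eq_conjTranspose, diagonal_conjTranspose]
  linear_combination d * hωω

end Matrix

open Matrix

theorem exists_mem_unitary_mul_eq_of_norm_eq {μ μ' : ℂ} (h : ‖μ'‖ = ‖μ‖) :
    ∃ ω ∈ unitary ℂ, μ' = ω * μ := by
  rcases eq_or_ne μ 0 with rfl | hμ
  · exact ⟨1, one_mem _, by simpa using h⟩
  · refine ⟨μ' / μ, ?_, (div_mul_cancel₀ μ' hμ).symm⟩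
    rw [Unitary.mem_iff_star_mul_self, RCLike.star_def, RCLike.conj_mul, norm_div, h,
      div_self (norm_ne_zero_iff.mpr hμ)]
    simp

theorem trace_conjTranspose_mul_self_Tmat (z1 z2 η : ℂ) :
    ((Tmat z1 z2 η)ᴴ * Tmat z1 z2 η).trace = ‖z1‖ ^ 2 + ‖z2‖ ^ 2 +
      ‖η‖ ^ 2 * ‖(Real.sqrt ((1 - ‖z1‖ ^ 2) * (1 - ‖z2‖ ^ 2)) : ℂ)‖ ^ 2 := by
  simp [trace_conjTranspose_mul_self_eq_sum_norm_sq, Fin.sum_univ_two, Tmat]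
  ring

theorem Tmat_mul_eq_diagonal_conj (z1 z2 η : ℂ) {ω : ℂ} (hω : ω ∈ unitary ℂ) :
    Tmat z1 z2 (ω * η) = diagonal ![1, ω] * Tmat z1 z2 η * star (diagonal ![1, ω]) := by
  rw [Tmat, Tmat, diagonal_one_conj_fin_two hω, zero_mul, mul_assoc]

theorem stmt_11 (z1 z2 : ℂ) (h1 : ‖z1‖ < 1) (h2 : ‖z2‖ < 1)
    (μ μ' : ℂ) :
    (∃ U : Matrix (Fin 2) (Fin 2) ℂ, U ∈ Matrix.unitaryGroup (Fin 2) ℂ ∧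
      Tmat z1 z2 μ' = U * Tmat z1 z2 μ * star U) ↔
    ‖μ'‖ = ‖μ‖ := by
  constructor
  · rintro ⟨U, hU, hconj⟩
    have hc : ‖(Real.sqrt ((1 - ‖z1‖ ^ 2) * (1 - ‖z2‖ ^ 2)) : ℂ)‖ ≠ 0 := by
      rw [Complex.norm_real, norm_ne_zero_iff, Real.sqrt_ne_zero']
      apply mul_pos <;> nlinarith [norm_nonneg z1, norm_nonneg z2]
    have htrace := congrArg (fun A => (Aᴴ * A).trace) hconj
    simp only [trace_conjTranspose_mul_self_unitary_conj hU, trace_conjTranspose_mul_self_Tmat,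
      add_right_inj] at htrace
    have hsq : ‖μ'‖ ^ 2 = ‖μ‖ ^ 2 := by
      exact_mod_cast mul_right_cancel₀ (pow_ne_zero 2 (Complex.ofReal_ne_zero.mpr hc)) htrace
    exact (sq_eq_sq₀ (norm_nonneg _) (norm_nonneg _)).mp hsq
  · intro h
    obtain ⟨ω, hω, rfl⟩ := exists_mem_unitary_mul_eq_of_norm_eq h
    refine ⟨diagonal ![1, ω], diagonal_mem_unitaryGroup fun i => ?_,
      Tmat_mul_eq_diagonal_conj z1 z2 μ hω⟩
    fin_cases i
    exacts [one_mem _, hω]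
end

section
/- Let n ∈ ℕ, let E = EuclideanSpace ℂ (Fin n), let T : E →L[ℂ] E, let z : Fin n → ℂ be injective, and let v : Fin n → E be linearly independent vectors such that the adjoint T* satisfies T* (v i) = (conj (z i)) • v i for every i. Then for every polynomial p ∈ ℂ[X], the operator norm of Polynomial.aeval T p (in the algebra of continuous linear endomorphisms of E) satisfies ‖Polynomial.aeval T p‖ ≤ 1 if and only if the n×n matrix M with entries M i j = (1 − p.eval (z i) * conj (p.eval (z j))) * ⟪v i, v j⟫ is positive semidefinite (Matrix.PosSemidef M). -/
/-!
From `T* vᵢ = conj zᵢ • vᵢ` one gets `p(T)* vᵢ = conj (p zᵢ) • vᵢ`, so the matrix is the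
difference of the Gram matrices of `(vᵢ)` and `(p(T)* vᵢ)`. Its quadratic form at `c` is
`‖x‖² - ‖p(T)* x‖²` with `x = ∑ cᵢ • vᵢ`. Since the `vᵢ` span `E`, positivity of the form for all `c`
says exactly `‖p(T)*‖ ≤ 1`, and `‖p(T)*‖ = ‖p(T)‖`.
-/

open scoped ComplexOrder InnerProductSpace ComplexConjugate
open Polynomial

namespace ContinuousLinearMap

variable {𝕜 E : Type*} [RCLike 𝕜] [NormedAddCommGroup E] [InnerProductSpace 𝕜 E] [CompleteSpace E]

theorem adjoint_aeval_apply_of_adjoint_apply_eq_smul (T : E →L[𝕜] E) (p : 𝕜[X]) {z : 𝕜} {v : E}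
    (hTv : adjoint T v = conj z • v) : adjoint (aeval T p) v = conj (p.eval z) • v := by
  induction p using Polynomial.induction_on with
  | C a => simp [Algebra.algebraMap_eq_smul_one, map_smulₛₗ, adjoint_one]
  | add p q hp hq => simp [hp, hq, add_smul]
  | monomial k a ih =>
    rw [pow_succ, ← mul_assoc, map_mul, aeval_X, mul_def, adjoint_comp, comp_apply, ih,
      map_smul, hTv, smul_smul, ← map_mul]
    simp [mul_assoc]

end ContinuousLinearMap

namespace Matrix

variable {𝕜 E F ι : Type*} [RCLike 𝕜] [NormedAddCommGroup E] [InnerProductSpace 𝕜 E]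
  [NormedAddCommGroup F] [InnerProductSpace 𝕜 F] [Fintype ι]

theorem star_dotProduct_gram_sub_gram_comp_mulVec (v : ι → E) (f : E →L[𝕜] F) (c : ι → 𝕜) :
    star c ⬝ᵥ (gram 𝕜 v - gram 𝕜 (f ∘ v)) *ᵥ c =
      ((‖∑ i, c i • v i‖ ^ 2 - ‖f (∑ i, c i • v i)‖ ^ 2 : ℝ) : 𝕜) := by
  simp only [sub_mulVec, dotProduct_sub, star_dotProduct_gram_mulVec, Function.comp_apply,
    map_sum, map_smul, inner_self_eq_norm_sq_to_K]
  push_cast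
  rfl

theorem posSemidef_gram_sub_gram_comp_iff {v : ι → E}
    (hv : Submodule.span 𝕜 (Set.range v) = ⊤) (f : E →L[𝕜] F) :
    (gram 𝕜 v - gram 𝕜 (f ∘ v)).PosSemidef ↔ ‖f‖ ≤ 1 := by
  rw [posSemidef_iff_dotProduct_mulVec,
    and_iff_right ((isHermitian_gram 𝕜 v).sub (isHermitian_gram 𝕜 (f ∘ v))),
    ContinuousLinearMap.opNorm_le_iff zero_le_one]
  simp only [star_dotProduct_gram_sub_gram_comp_mulVec, RCLike.ofReal_nonneg, sub_nonneg, one_mul,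
    pow_le_pow_iff_left₀ (norm_nonneg _) (norm_nonneg _) two_ne_zero]
  have hcomb (x : E) : ∃ c : ι → 𝕜, ∑ i, c i • v i = x :=
    Submodule.mem_span_range_iff_exists_fun 𝕜 |>.mp (hv ▸ Submodule.mem_top)
  exact ⟨fun h x => by obtain ⟨c, rfl⟩ := hcomb x; exact h c, fun h c => h _⟩

end Matrix

theorem stmt_12_general (n : ℕ)
    (T : EuclideanSpace ℂ (Fin n) →L[ℂ] EuclideanSpace ℂ (Fin n))
    (z : Fin n → ℂ)
    (v : Fin n → EuclideanSpace ℂ (Fin n)) (hv : LinearIndependent ℂ v)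
    (hT : ∀ i, ContinuousLinearMap.adjoint T (v i) = (starRingEnd ℂ) (z i) • v i)
    (p : Polynomial ℂ) :
    ‖Polynomial.aeval T p‖ ≤ 1 ↔
      Matrix.PosSemidef (Matrix.of fun i j : Fin n =>
        (1 - p.eval (z i) * (starRingEnd ℂ) (p.eval (z j))) *
          (inner ℂ (v i) (v j) : ℂ)) := by
  set S := aeval T p
  have hSv : ContinuousLinearMap.adjoint S ∘ v = fun i => conj (p.eval (z i)) • v i :=
    funext fun i => T.adjoint_aeval_apply_of_adjoint_apply_eq_smul p (hT i)
  have hpick : Matrix.of (fun i j : Fin n =>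
      (1 - p.eval (z i) * conj (p.eval (z j))) * ⟪v i, v j⟫_ℂ) =
        Matrix.gram ℂ v - Matrix.gram ℂ (ContinuousLinearMap.adjoint S ∘ v) := by
    ext i j
    simp only [Matrix.of_apply, Matrix.sub_apply, Matrix.gram_apply, hSv, inner_smul_left,
      inner_smul_right, starRingEnd_self_apply]
    ring
  have hspan : Submodule.span ℂ (Set.range v) = ⊤ :=
    hv.span_eq_top_of_card_eq_finrank' (by simp)
  rw [hpick, Matrix.posSemidef_gram_sub_gram_comp_iff hspan, LinearIsometryEquiv.norm_map]

theorem stmt_12 (n : ℕ)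
    (T : EuclideanSpace ℂ (Fin n) →L[ℂ] EuclideanSpace ℂ (Fin n))
    (z : Fin n → ℂ) (hz : Function.Injective z)
    (v : Fin n → EuclideanSpace ℂ (Fin n)) (hv : LinearIndependent ℂ v)
    (hT : ∀ i, ContinuousLinearMap.adjoint T (v i) = (starRingEnd ℂ) (z i) • v i)
    (p : Polynomial ℂ) :
    ‖Polynomial.aeval T p‖ ≤ 1 ↔
      Matrix.PosSemidef (Matrix.of fun i j : Fin n =>
        (1 - p.eval (z i) * (starRingEnd ℂ) (p.eval (z j))) *
          (inner ℂ (v i) (v j) : ℂ)) :=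
  stmt_12_general n T z v hv hT p
end
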